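/- arXiv:1206.1906 — 2 statements merged into one kernel-verified Lean document; each statement's English description precedes it below -/
import Mathlib

section
/- Let G be a connected graph and let H be a vertex-transitive graph. Then dim_f(G⊙H) = |V(G)||V(H)| / (2k(H) − max{2λ(H), 2μ(H) − 2}). -/
open Finset

variable {α β V : Type*}

/-- The corona product `G ⊙ H`. -/
def SimpleGraph.corona (G : SimpleGraph α) (H : SimpleGraph β) :
    SimpleGraph (α ⊕ α × β) where
  Adj x y :=
    match x, y with
    | Sum.inl u1, Sum.inl u2 => G.Adj u1 u2
    | Sum.inl u1, Sum.inr p => u1 = p.1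
    | Sum.inr p, Sum.inl u2 => p.1 = u2
    | Sum.inr p, Sum.inr q => p.1 = q.1 ∧ H.Adj p.2 q.2
  symm := by
    constructor
    rintro (u1 | p) (u2 | q) h
    · exact h.symm
    · exact h.symm
    · exact h.symm
    · exact ⟨h.1.symm, h.2.symm⟩
  loopless := by
    constructor
    rintro (u | p) h
    · exact G.irrefl h
    · exact H.irrefl h.2

/-- The lexicographic product `G[H]`. -/
def SimpleGraph.lexProd (G : SimpleGraph α) (H : SimpleGraph β) :
    SimpleGraph (α × β) where
  Adj x y := G.Adj x.1 y.1 ∨ (x.1 = y.1 ∧ H.Adj x.2 y.2)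
  symm := by
    constructor
    rintro x y (h | ⟨h1, h2⟩)
    · exact Or.inl h.symm
    · exact Or.inr ⟨h1.symm, h2.symm⟩
  loopless := by
    constructor
    rintro x (h | ⟨h1, h2⟩)
    · exact G.irrefl h
    · exact H.irrefl h2

open scoped Classical in
/-- `R_F{x,y}`: the set of vertices resolving `x` and `y` (distance measured by `edist`,
which is `∞` between vertices in different components). -/
noncomputable def resolvingFinset (F : SimpleGraph V) [Fintype V] (x y : V) : Finset V :=
  univ.filter fun z => F.edist x z ≠ F.edist y z

/-- `S_H{v₁,v₂} = {v₁,v₂} ∪ (N_H(v₁) Δ N_H(v₂))`. -/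
def locatingFinset (H : SimpleGraph V) [Fintype V] [DecidableEq V]
    [DecidableRel H.Adj] (v1 v2 : V) : Finset V :=
  {v1, v2} ∪ symmDiff (H.neighborFinset v1) (H.neighborFinset v2)

/-- A resolving function of `F`. -/
def IsResolvingFn (F : SimpleGraph V) [Fintype V] (g : V → ℝ) : Prop :=
  (∀ v, g v ∈ Set.Icc (0 : ℝ) 1) ∧
    ∀ x y : V, x ≠ y → 1 ≤ ∑ z ∈ resolvingFinset F x y, g z

/-- The fractional metric dimension `dim_f(F)`. -/
noncomputable def fracMetricDim (F : SimpleGraph V) [Fintype V] : ℝ :=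
  sInf {w | ∃ g, IsResolvingFn F g ∧ w = ∑ v, g v}

/-- A locating function of `H`. -/
def IsLocatingFn (H : SimpleGraph V) [Fintype V] [DecidableEq V]
    [DecidableRel H.Adj] (g : V → ℝ) : Prop :=
  (∀ v, g v ∈ Set.Icc (0 : ℝ) 1) ∧
    ∀ v1 v2 : V, v1 ≠ v2 → 1 ≤ ∑ v ∈ locatingFinset H v1 v2, g v

/-- `l_f(H)`: the minimum weight of a locating function. -/
noncomputable def fracLoc (H : SimpleGraph V) [Fintype V] [DecidableEq V]
    [DecidableRel H.Adj] : ℝ :=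
  sInf {w | ∃ g, IsLocatingFn H g ∧ w = ∑ v, g v}

open scoped Classical in
/-- `λ(H)`: maximum number of common neighbours of two adjacent vertices, `-1` if no edges. -/
noncomputable def lambdaMax (H : SimpleGraph V) [Fintype V] : ℤ :=
  if hne : (univ.filter fun p : V × V => H.Adj p.1 p.2).Nonempty then
    (univ.filter fun p : V × V => H.Adj p.1 p.2).sup' hne fun p =>
      ((univ.filter fun w => H.Adj p.1 w ∧ H.Adj p.2 w).card : ℤ)
  else -1

open scoped Classical in
/-- `μ(H)`: maximum number of common neighbours of two distinct nonadjacent vertices,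
`0` for complete graphs. -/
noncomputable def muMax (H : SimpleGraph V) [Fintype V] : ℤ :=
  if hne : (univ.filter fun p : V × V => p.1 ≠ p.2 ∧ ¬H.Adj p.1 p.2).Nonempty then
    (univ.filter fun p : V × V => p.1 ≠ p.2 ∧ ¬H.Adj p.1 p.2).sup' hne fun p =>
      ((univ.filter fun w => H.Adj p.1 w ∧ H.Adj p.2 w).card : ℤ)
  else 0

/-- A graph is vertex-transitive if its automorphism group is transitive on vertices. -/
def IsVertexTransitive (H : SimpleGraph V) : Prop :=
  ∀ u v : V, ∃ φ : H ≃g H, φ u = v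

/-- Two distinct vertices are twins if they have the same closed or the same open
neighbourhood. -/
def SimpleGraph.Twins (G : SimpleGraph V) (u1 u2 : V) : Prop :=
  u1 ≠ u2 ∧ (insert u1 (G.neighborSet u1) = insert u2 (G.neighborSet u2) ∨
    G.neighborSet u1 = G.neighborSet u2)

open scoped Classical in
/-- `m₁(G)`: number of vertices in twin-equivalence classes of type 1 (singletons). -/
noncomputable def m1 (G : SimpleGraph V) [Fintype V] : ℕ :=
  (univ.filter fun u => ∀ w, ¬G.Twins u w).card

open scoped Classical in
/-- `m₂(G)`: number of vertices in twin-equivalence classes of type 2 (cliques). -/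
noncomputable def m2 (G : SimpleGraph V) [Fintype V] : ℕ :=
  (univ.filter fun u => ∃ w, G.Twins u w ∧ G.Adj u w).card

open scoped Classical in
/-- `m₃(G)`: number of vertices in twin-equivalence classes of type 3 (independent sets). -/
noncomputable def m3 (G : SimpleGraph V) [Fintype V] : ℕ :=
  (univ.filter fun u => ∃ w, G.Twins u w ∧ ¬G.Adj u w).card

/-!
In `G ⊙ H` every path from outside the `i`-th copy of `H` into it passes through the vertex `i`.
So two vertices `(i,u)`, `(i,v)` of one copy are resolved exactly by the copy vertices `(i,w)`
with `w ∈ S_H{u,v}`, while every other pair of distinct vertices is resolved by a whole copy of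
`H`: the copy at one of the two, or, for a vertex `i` of `G` and a vertex of its own copy, any
other copy. Hence the weight `1/s` on every copy vertex, with `s` the least size of a set
`S_H{u,v}`, is a resolving function. Conversely, averaging the locating constraints of one copy
over the automorphism group of the vertex-transitive graph `H` forces weight at least `|V(H)|/s`
on each copy. For `H` `k`-regular, `|S_H{u,v}|` is `2k − 2c` or `2k + 2 − 2c`, with `c` the
number of common neighbours, as `u`, `v` are adjacent or not, so `s = 2k − max{2λ, 2μ − 2}`.
-/

section Resolving

variable {F : SimpleGraph V} [Fintype V]

lemma mem_resolvingFinset {x y z : V} :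
    z ∈ resolvingFinset F x y ↔ F.edist x z ≠ F.edist y z := by
  simp [resolvingFinset]

lemma resolvingFinset_comm (x y : V) : resolvingFinset F x y = resolvingFinset F y x := by
  ext z
  simp only [mem_resolvingFinset, ne_comm]

end Resolving

lemma mem_locatingFinset {H : SimpleGraph V} [Fintype V] [DecidableEq V] [DecidableRel H.Adj]
    {u v w : V} :
    w ∈ locatingFinset H u v ↔ w = u ∨ w = v ∨ ¬(H.Adj u w ↔ H.Adj v w) := by
  simp only [locatingFinset, mem_union, mem_insert, mem_singleton, mem_symmDiff,
    SimpleGraph.mem_neighborFinset]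
  tauto

lemma Finset.card_symmDiff_add_two_mul_card_inter [DecidableEq V] (s t : Finset V) :
    #(symmDiff s t) + 2 * #(s ∩ t) = #s + #t := by
  rw [symmDiff_def, sup_eq_union, card_union_of_disjoint disjoint_sdiff_sdiff]
  have hs := card_sdiff_add_card_inter s t
  have ht := card_sdiff_add_card_inter t s
  rw [inter_comm] at ht
  omega

section CommonNeighbors

variable {H : SimpleGraph V} [Fintype V]

lemma card_filter_adj_and_adj (x y : V) [DecidablePred fun w => H.Adj x w ∧ H.Adj y w] :
    #{w | H.Adj x w ∧ H.Adj y w} = (H.commonNeighbors x y).ncard := by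
  rw [← Set.ncard_coe_finset]
  congr
  ext
  simp [SimpleGraph.mem_commonNeighbors]

lemma ncard_commonNeighbors_le_lambdaMax {x y : V} (h : H.Adj x y) :
    ((H.commonNeighbors x y).ncard : ℤ) ≤ lambdaMax H := by
  rw [lambdaMax, dif_pos ⟨(x, y), by simpa⟩]
  exact le_sup'_of_le _ (b := (x, y)) (by simpa) (by rw [card_filter_adj_and_adj])

lemma exists_adj_ncard_commonNeighbors_eq_lambdaMax {x y : V} (h : H.Adj x y) :
    ∃ a b, H.Adj a b ∧ ((H.commonNeighbors a b).ncard : ℤ) = lambdaMax H := by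
  classical
  unfold lambdaMax
  split_ifs with hne
  · obtain ⟨p, hp, hmax⟩ := exists_mem_eq_sup' hne fun p : V × V =>
      (#{w | H.Adj p.1 w ∧ H.Adj p.2 w} : ℤ)
    exact ⟨p.1, p.2, by simpa using hp, by rw [hmax, card_filter_adj_and_adj]⟩
  · exact absurd ⟨(x, y), by simpa⟩ hne

lemma lambdaMax_eq_neg_one (h : ∀ x y, ¬H.Adj x y) : lambdaMax H = -1 := by
  unfold lambdaMax
  rw [dif_neg]
  simpa [Finset.Nonempty] using h

lemma ncard_commonNeighbors_le_muMax {x y : V} (hxy : x ≠ y) (h : ¬H.Adj x y) :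
    ((H.commonNeighbors x y).ncard : ℤ) ≤ muMax H := by
  rw [muMax, dif_pos ⟨(x, y), by simpa [hxy]⟩]
  exact le_sup'_of_le _ (b := (x, y)) (by simpa [hxy]) (by rw [card_filter_adj_and_adj])

lemma exists_not_adj_ncard_commonNeighbors_eq_muMax {x y : V} (hxy : x ≠ y) (h : ¬H.Adj x y) :
    ∃ a b, a ≠ b ∧ ¬H.Adj a b ∧ ((H.commonNeighbors a b).ncard : ℤ) = muMax H := by
  classical
  unfold muMax
  split_ifs with hne
  · obtain ⟨p, hp, hmax⟩ := exists_mem_eq_sup' hne fun p : V × V =>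
      (#{w | H.Adj p.1 w ∧ H.Adj p.2 w} : ℤ)
    simp only [mem_filter, mem_univ, true_and] at hp
    exact ⟨p.1, p.2, hp.1, hp.2, by rw [hmax, card_filter_adj_and_adj]⟩
  · exact absurd ⟨(x, y), by simpa [hxy]⟩ hne

lemma muMax_eq_zero (h : ∀ x y, x ≠ y → H.Adj x y) : muMax H = 0 := by
  unfold muMax
  rw [dif_neg]
  simpa [Finset.Nonempty] using h

end CommonNeighbors

section Locating

variable {H : SimpleGraph V} [Fintype V] [DecidableEq V] [DecidableRel H.Adj]

lemma ncard_commonNeighbors_eq_card_inter (u v : V) :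
    (H.commonNeighbors u v).ncard = #(H.neighborFinset u ∩ H.neighborFinset v) := by
  rw [← Set.ncard_coe_finset, coe_inter, SimpleGraph.coe_neighborFinset,
    SimpleGraph.coe_neighborFinset, SimpleGraph.commonNeighbors_eq]

lemma card_locatingFinset_of_adj {u v : V} (h : H.Adj u v) :
    #(locatingFinset H u v) + 2 * (H.commonNeighbors u v).ncard = H.degree u + H.degree v := by
  have hsub : {u, v} ⊆ symmDiff (H.neighborFinset u) (H.neighborFinset v) := by
    intro w hw
    rcases mem_insert.mp hw with rfl | hw
    · simpa [mem_symmDiff] using h.symm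
    · rw [mem_singleton.mp hw]
      simpa [mem_symmDiff] using h
  rw [locatingFinset, union_eq_right.mpr hsub, ncard_commonNeighbors_eq_card_inter,
    card_symmDiff_add_two_mul_card_inter, SimpleGraph.card_neighborFinset_eq_degree,
    SimpleGraph.card_neighborFinset_eq_degree]

lemma card_locatingFinset_of_not_adj {u v : V} (huv : u ≠ v) (h : ¬H.Adj u v) :
    #(locatingFinset H u v) + 2 * (H.commonNeighbors u v).ncard =
      H.degree u + H.degree v + 2 := by
  have hdisj : Disjoint {u, v} (symmDiff (H.neighborFinset u) (H.neighborFinset v)) := by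
    rw [disjoint_insert_left, disjoint_singleton_left]
    constructor <;> simp [mem_symmDiff, h, mt H.adj_symm h]
  have hsd := card_symmDiff_add_two_mul_card_inter (H.neighborFinset u) (H.neighborFinset v)
  rw [locatingFinset, card_union_of_disjoint hdisj, card_pair huv,
    ncard_commonNeighbors_eq_card_inter, ← H.card_neighborFinset_eq_degree,
    ← H.card_neighborFinset_eq_degree]
  omega

namespace SimpleGraph.IsRegularOfDegree

variable {k : ℕ} (hreg : H.IsRegularOfDegree k)
include hreg

lemma le_card_locatingFinset {u v : V} (huv : u ≠ v) :
    2 * (k : ℤ) - max (2 * lambdaMax H) (2 * muMax H - 2) ≤ #(locatingFinset H u v) := by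
  have hl := le_max_left (2 * lambdaMax H) (2 * muMax H - 2)
  have hm := le_max_right (2 * lambdaMax H) (2 * muMax H - 2)
  by_cases h : H.Adj u v
  · have hcard := card_locatingFinset_of_adj h
    have hc := ncard_commonNeighbors_le_lambdaMax h
    rw [hreg u, hreg v] at hcard
    omega
  · have hcard := card_locatingFinset_of_not_adj huv h
    have hc := ncard_commonNeighbors_le_muMax huv h
    rw [hreg u, hreg v] at hcard
    omega

variable [Nontrivial V]

lemma exists_card_locatingFinset_le_lambdaMax :
    ∃ u v, u ≠ v ∧ (#(locatingFinset H u v) : ℤ) ≤ 2 * k - 2 * lambdaMax H := by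
  by_cases hE : ∃ x y, H.Adj x y
  · obtain ⟨x, y, hxy⟩ := hE
    obtain ⟨a, b, hab, hc⟩ := exists_adj_ncard_commonNeighbors_eq_lambdaMax hxy
    have hcard := card_locatingFinset_of_adj hab
    rw [hreg a, hreg b] at hcard
    exact ⟨a, b, hab.ne, by omega⟩
  · push Not at hE
    obtain ⟨a, b, hab⟩ := exists_pair_ne V
    have hcard := card_locatingFinset_of_not_adj hab (hE a b)
    rw [hreg a, hreg b] at hcard
    exact ⟨a, b, hab, by rw [lambdaMax_eq_neg_one hE]; omega⟩

lemma exists_card_locatingFinset_le_muMax :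
    ∃ u v, u ≠ v ∧ (#(locatingFinset H u v) : ℤ) ≤ 2 * k + 2 - 2 * muMax H := by
  by_cases hN : ∃ x y, x ≠ y ∧ ¬H.Adj x y
  · obtain ⟨x, y, hxy, hn⟩ := hN
    obtain ⟨a, b, hab, hn', hc⟩ := exists_not_adj_ncard_commonNeighbors_eq_muMax hxy hn
    have hcard := card_locatingFinset_of_not_adj hab hn'
    rw [hreg a, hreg b] at hcard
    exact ⟨a, b, hab, by omega⟩
  · push Not at hN
    obtain ⟨a, b, hab⟩ := exists_pair_ne V
    have hcard := card_locatingFinset_of_adj (hN a b hab)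
    rw [hreg a, hreg b] at hcard
    exact ⟨a, b, hab, by rw [muMax_eq_zero hN]; omega⟩

lemma exists_card_locatingFinset_eq :
    ∃ u v, u ≠ v ∧
      (#(locatingFinset H u v) : ℤ) = 2 * k - max (2 * lambdaMax H) (2 * muMax H - 2) := by
  rcases le_total (2 * lambdaMax H) (2 * muMax H - 2) with h | h
  · obtain ⟨u, v, huv, hle⟩ := exists_card_locatingFinset_le_muMax hreg
    refine ⟨u, v, huv, le_antisymm ?_ (le_card_locatingFinset hreg huv)⟩
    rw [max_eq_right h]
    omega
  · obtain ⟨u, v, huv, hle⟩ := exists_card_locatingFinset_le_lambdaMax hreg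
    exact ⟨u, v, huv, le_antisymm (by rw [max_eq_left h]; omega)
      (le_card_locatingFinset hreg huv)⟩

end SimpleGraph.IsRegularOfDegree

end Locating

instance SimpleGraph.Iso.finite {H : SimpleGraph V} [Finite V] : Finite (H ≃g H) :=
  Finite.of_injective _ DFunLike.coe_injective

lemma sum_locatingFinset_comp_iso {M : Type*} [AddCommMonoid M] {H : SimpleGraph V} [Fintype V]
    [DecidableEq V] [DecidableRel H.Adj] (φ : H ≃g H) (f : V → M) (u v : V) :
    ∑ w ∈ locatingFinset H u v, f (φ w) = ∑ w ∈ locatingFinset H (φ u) (φ v), f w :=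
  sum_equiv φ.toEquiv (fun w => by simp [mem_locatingFinset, φ.map_adj_iff])
    fun _ _ => rfl

namespace IsVertexTransitive

variable {H : SimpleGraph V} (hvt : IsVertexTransitive H)
include hvt

lemma sum_apply_iso_eq {M : Type*} [AddCommMonoid M] [Fintype (H ≃g H)] (g : V → M) (v w : V) :
    ∑ φ : H ≃g H, g (φ v) = ∑ φ : H ≃g H, g (φ w) := by
  obtain ⟨ψ, rfl⟩ := hvt w v
  exact Fintype.sum_equiv (Equiv.mulRight ψ) _ _ fun φ => by simp [RelIso.mul_apply]

lemma card_le_card_mul_sum [Fintype V] {g : V → ℝ} (s : Finset V)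
    (hs : ∀ φ : H ≃g H, 1 ≤ ∑ v ∈ s, g (φ v)) :
    (Fintype.card V : ℝ) ≤ #s * ∑ v, g v := by
  have := Fintype.ofFinite (H ≃g H)
  obtain ⟨a, -⟩ : s.Nonempty := nonempty_of_sum_ne_zero (zero_lt_one.trans_le (hs 1)).ne'
  set A := ∑ φ : H ≃g H, g (φ a)
  have hcount : (Fintype.card V : ℝ) * A = Fintype.card (H ≃g H) * ∑ v, g v :=
    calc (Fintype.card V : ℝ) * A = ∑ v, ∑ φ : H ≃g H, g (φ v) := by
          simp [hvt.sum_apply_iso_eq g _ a, A]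
      _ = ∑ φ : H ≃g H, ∑ v, g (φ v) := sum_comm
      _ = ∑ _φ : H ≃g H, ∑ v, g v := sum_congr rfl fun φ _ => Equiv.sum_comp φ.toEquiv g
      _ = Fintype.card (H ≃g H) * ∑ v, g v := by simp
  have hcover : (Fintype.card (H ≃g H) : ℝ) ≤ #s * A :=
    calc (Fintype.card (H ≃g H) : ℝ) = ∑ _φ : H ≃g H, 1 := by simp
      _ ≤ ∑ φ : H ≃g H, ∑ v ∈ s, g (φ v) := sum_le_sum fun φ _ => hs φ
      _ = ∑ v ∈ s, ∑ φ : H ≃g H, g (φ v) := sum_comm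
      _ = #s * A := by simp [hvt.sum_apply_iso_eq g _ a, A]
  have hpos : (0 : ℝ) < Fintype.card (H ≃g H) := by exact_mod_cast Fintype.card_pos
  refine le_of_mul_le_mul_left ?_ hpos
  calc (Fintype.card (H ≃g H) : ℝ) * Fintype.card V ≤ #s * A * Fintype.card V :=
        mul_le_mul_of_nonneg_right hcover (Nat.cast_nonneg _)
    _ = Fintype.card (H ≃g H) * (#s * ∑ v, g v) := by rw [mul_assoc, mul_comm A, hcount]; ring

end IsVertexTransitive

namespace SimpleGraph

open Sum

variable (G : SimpleGraph α) (H : SimpleGraph β)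

lemma corona_edist_inl_inr_self (i : α) (v : β) :
    (G.corona H).edist (inl i) (inr (i, v)) = 1 :=
  edist_eq_one_iff_adj.mpr rfl

lemma corona_edist_inr_inr_self [DecidableEq β] [DecidableRel H.Adj] (i : α) (u v : β) :
    (G.corona H).edist (inr (i, u)) (inr (i, v)) =
      if u = v then 0 else if H.Adj u v then 1 else 2 := by
  split_ifs with huv hadj
  · rw [huv, edist_self]
  · exact edist_eq_one_iff_adj.mpr ⟨rfl, hadj⟩
  · exact edist_eq_two_iff.mpr ⟨by simpa using huv, fun h => hadj h.2, inl i, rfl, rfl⟩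

lemma corona_inl_mem_support {i : α} {z : α ⊕ α × β} {w : β}
    (p : (G.corona H).Walk z (inr (i, w))) (hz : ∀ v, z ≠ inr (i, v)) :
    inl i ∈ p.support := by
  obtain ⟨d, hd, hfst, hsnd⟩ :=
    p.exists_boundary_dart {x | ∀ v, x ≠ inr (i, v)} hz (by simp)
  obtain ⟨v, hv⟩ : ∃ v, d.snd = inr (i, v) := by simpa using hsnd
  have hadj := d.adj
  rw [hv] at hadj
  have hfst_eq : d.fst = inl i := by
    rcases hd' : d.fst with j | ⟨j, u⟩ <;> rw [hd'] at hadj hfst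
    · rw [show j = i from hadj]
    · exact absurd (show (j, u) = (i, u) by rw [show j = i from hadj.1]) (by simpa using hfst u)
  exact hfst_eq ▸ p.dart_fst_mem_support_of_mem_darts hd

lemma corona_edist_inr_of_forall_ne {i : α} {z : α ⊕ α × β} (hz : ∀ v, z ≠ inr (i, v))
    (w : β) :
    (G.corona H).edist z (inr (i, w)) = (G.corona H).edist z (inl i) + 1 := by
  refine le_antisymm ?_ ?_
  · calc (G.corona H).edist z (inr (i, w))
        ≤ (G.corona H).edist z (inl i) + (G.corona H).edist (inl i) (inr (i, w)) :=
          SimpleGraph.edist_triangle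
      _ = (G.corona H).edist z (inl i) + 1 := by rw [corona_edist_inl_inr_self]
  · rcases eq_or_ne ((G.corona H).edist z (inr (i, w))) ⊤ with h | h
    · exact h ▸ le_top
    obtain ⟨p, hp⟩ := exists_walk_of_edist_ne_top h
    classical
    have hmem := corona_inl_mem_support G H p hz
    have hdrop : 1 ≤ (p.dropUntil _ hmem).length := by
      by_contra! h0
      simpa using Walk.eq_of_length_eq_zero (Nat.lt_one_iff.mp h0)
    have hsplit := congrArg Walk.length (p.take_spec hmem)
    rw [Walk.length_append] at hsplit
    rw [← hp, ← hsplit, Nat.cast_add]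
    exact add_le_add (edist_le _) (by exact_mod_cast hdrop)

lemma corona_reachable_inl_inl (hG : G.Connected) (i j : α) :
    (G.corona H).Reachable (inl i) (inl j) :=
  (hG.preconnected i j).map { toFun := inl, map_rel' := id }

variable [Fintype α] [Fintype β]

lemma corona_resolvingFinset_inr_inr_self [DecidableEq β] [DecidableRel H.Adj] (i : α) {u v : β}
    (huv : u ≠ v) :
    resolvingFinset (G.corona H) (inr (i, u)) (inr (i, v)) =
      (locatingFinset H u v).map ((Function.Embedding.sectR i β).trans .inr) := by
  ext z
  rw [mem_resolvingFinset, Finset.mem_map]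
  by_cases hz : ∀ w, z ≠ inr (i, w)
  · rw [edist_comm, corona_edist_inr_of_forall_ne G H hz, edist_comm (u := inr (i, v)),
      corona_edist_inr_of_forall_ne G H hz]
    simpa using fun w _ h => hz w h.symm
  · obtain ⟨w, rfl⟩ : ∃ w, z = inr (i, w) := by simpa using hz
    simp only [corona_edist_inr_inr_self, Function.Embedding.trans_apply,
      Function.Embedding.sectR_apply, Function.Embedding.inr_apply, inr.injEq, Prod.mk.injEq,
      true_and, exists_eq_right, mem_locatingFinset]
    split_ifs <;> subst_vars <;> simp_all [eq_comm (a := w)]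

lemma corona_inr_mem_resolvingFinset_inl {i : α} {y : α ⊕ α × β} (hy : y ≠ inl i)
    (hy' : ∀ v, y ≠ inr (i, v)) (w : β) :
    inr (i, w) ∈ resolvingFinset (G.corona H) (inl i) y := by
  rw [mem_resolvingFinset, corona_edist_inl_inr_self, corona_edist_inr_of_forall_ne G H hy']
  intro h
  refine hy (edist_eq_zero_iff (G := G.corona H).mp ?_)
  generalize (G.corona H).edist y (inl i) = d at h
  induction d using ENat.recTopCoe
  · simp at h
  · norm_cast at h ⊢
    omega

lemma corona_inr_mem_resolvingFinset_inl_inr_self (hG : G.Connected) {i m : α} (hm : m ≠ i)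
    (v w : β) : inr (m, w) ∈ resolvingFinset (G.corona H) (inl i) (inr (i, v)) := by
  rw [mem_resolvingFinset, corona_edist_inr_of_forall_ne G H (z := inl i) (by simp),
    corona_edist_inr_of_forall_ne G H (i := m) (z := inr (i, v)) (by simpa using hm.symm),
    edist_comm (u := inr (i, v)), corona_edist_inr_of_forall_ne G H (by simp),
    edist_comm (u := inl m)]
  have hfin := edist_ne_top_iff_reachable.mpr (corona_reachable_inl_inl G H hG i m)
  lift (G.corona H).edist (inl i) (inl m) to ℕ using hfin with d
  norm_cast
  omega

lemma corona_inr_mem_resolvingFinset_inr_inr {i j : α} (hij : i ≠ j) (u v w : β) :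
    inr (i, w) ∈ resolvingFinset (G.corona H) (inr (i, u)) (inr (j, v)) := by
  have hle : (G.corona H).edist (inr (i, u)) (inr (i, w)) ≤ 2 :=
    calc (G.corona H).edist (inr (i, u)) (inr (i, w))
        ≤ (G.corona H).edist (inr (i, u)) (inl i) + (G.corona H).edist (inl i) (inr (i, w)) :=
          SimpleGraph.edist_triangle
      _ = 2 := by rw [edist_comm, corona_edist_inl_inr_self, corona_edist_inl_inr_self]; rfl
  rw [mem_resolvingFinset,
    corona_edist_inr_of_forall_ne G H (i := i) (z := inr (j, v)) (by simpa using hij.symm),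
    edist_comm (u := inr (j, v)), corona_edist_inr_of_forall_ne G H (z := inl i) (by simp)]
  intro h
  have hpos : (G.corona H).edist (inl i) (inl j) ≠ 0 := by simpa using hij
  rw [h] at hle
  generalize (G.corona H).edist (inl i) (inl j) = d at hle hpos
  induction d using ENat.recTopCoe
  · simp at hle
  · norm_cast at hle hpos
    omega

lemma corona_sum_copy_le_sum_resolvingFinset {f : α ⊕ α × β → ℝ} (hf : ∀ z, 0 ≤ f z)
    {x y : α ⊕ α × β} {m : α} (hm : ∀ w, inr (m, w) ∈ resolvingFinset (G.corona H) x y) :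
    ∑ w, f (inr (m, w)) ≤ ∑ z ∈ resolvingFinset (G.corona H) x y, f z := by
  calc ∑ w, f (inr (m, w))
      = ∑ z ∈ univ.map ((Function.Embedding.sectR m β).trans .inr), f z := by
        rw [sum_map]
        rfl
    _ ≤ _ := sum_le_sum_of_subset_of_nonneg (by simpa [subset_iff] using hm) fun z _ _ => hf z

variable [DecidableEq β] [DecidableRel H.Adj]

lemma corona_sum_resolvingFinset_inr_inr_self {M : Type*} [AddCommMonoid M]
    (f : α ⊕ α × β → M) (i : α) {u v : β} (huv : u ≠ v) :
    ∑ z ∈ resolvingFinset (G.corona H) (inr (i, u)) (inr (i, v)), f z =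
      ∑ w ∈ locatingFinset H u v, f (inr (i, w)) := by
  rw [corona_resolvingFinset_inr_inr_self G H i huv, sum_map]
  rfl

lemma isResolvingFn_corona_elim_zero_inv [Nontrivial α] (hG : G.Connected) {s : ℕ} (hs : 0 < s)
    (hsβ : s ≤ Fintype.card β) (hmin : ∀ u v, u ≠ v → s ≤ #(locatingFinset H u v)) :
    IsResolvingFn (G.corona H) (Sum.elim 0 fun _ => (s : ℝ)⁻¹) := by
  set g : α ⊕ α × β → ℝ := Sum.elim 0 fun _ => (s : ℝ)⁻¹
  have hg : ∀ z, 0 ≤ g z := by rintro (i | p) <;> simp [g]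
  have hcopy {x y : α ⊕ α × β} (m : α)
      (hm : ∀ w, inr (m, w) ∈ resolvingFinset (G.corona H) x y) :
      1 ≤ ∑ z ∈ resolvingFinset (G.corona H) x y, g z :=
    calc (1 : ℝ) ≤ Fintype.card β / s := by
          rw [one_le_div (by exact_mod_cast hs)]
          exact_mod_cast hsβ
      _ = ∑ w, g (inr (m, w)) := by simp [g, div_eq_mul_inv]
      _ ≤ _ := corona_sum_copy_le_sum_resolvingFinset G H hg hm
  have hhub (i : α) (y : α ⊕ α × β) (hy : inl i ≠ y) :
      1 ≤ ∑ z ∈ resolvingFinset (G.corona H) (inl i) y, g z := by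
    by_cases hy' : ∃ v, y = inr (i, v)
    · obtain ⟨v, rfl⟩ := hy'
      obtain ⟨m, hm⟩ := exists_ne i
      exact hcopy m (corona_inr_mem_resolvingFinset_inl_inr_self G H hG hm v)
    · push Not at hy'
      exact hcopy i (corona_inr_mem_resolvingFinset_inl G H hy.symm hy')
  refine ⟨fun z => ⟨hg z, ?_⟩, ?_⟩
  · rcases z with i | p
    · simp [g]
    · exact inv_le_one_of_one_le₀ (by exact_mod_cast hs)
  rintro (i | ⟨i, u⟩) y hxy
  · exact hhub i y hxy
  rcases y with j | ⟨j, v⟩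
  · rw [resolvingFinset_comm]
    exact hhub j _ hxy.symm
  by_cases hij : i = j
  · subst hij
    have huv : u ≠ v := by rintro rfl; exact hxy rfl
    rw [corona_sum_resolvingFinset_inr_inr_self G H g i huv]
    simp only [g, elim_inr, sum_const, nsmul_eq_mul]
    rw [← div_eq_mul_inv, one_le_div (by exact_mod_cast hs)]
    exact_mod_cast hmin u v huv
  · exact hcopy i (corona_inr_mem_resolvingFinset_inr_inr G H hij u v)

lemma card_mul_card_div_le_sum_of_isResolvingFn_corona (hvt : IsVertexTransitive H) {a b : β}
    (hab : a ≠ b) {g : α ⊕ α × β → ℝ} (hg : IsResolvingFn (G.corona H) g) :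
    (Fintype.card α * Fintype.card β : ℝ) / #(locatingFinset H a b) ≤ ∑ z, g z := by
  have hS : (0 : ℝ) < #(locatingFinset H a b) := by
    exact_mod_cast card_pos.mpr ⟨a, by simp [mem_locatingFinset]⟩
  have hcopy (i : α) :
      (Fintype.card β : ℝ) ≤ #(locatingFinset H a b) * ∑ w, g (inr (i, w)) :=
    hvt.card_le_card_mul_sum _ fun φ => by
      rw [sum_locatingFinset_comp_iso φ (fun w => g (inr (i, w))),
        ← corona_sum_resolvingFinset_inr_inr_self G H g i (φ.injective.ne hab)]
      exact hg.2 _ _ (by simpa using φ.injective.ne hab)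
  have hhubs : 0 ≤ ∑ i, g (inl i) := sum_nonneg fun i _ => (hg.1 _).1
  have hcopies : (Fintype.card α * Fintype.card β : ℝ) ≤
      #(locatingFinset H a b) * ∑ i, ∑ w, g (inr (i, w)) :=
    calc (Fintype.card α * Fintype.card β : ℝ) = ∑ _i : α, (Fintype.card β : ℝ) := by simp
      _ ≤ ∑ i, #(locatingFinset H a b) * ∑ w, g (inr (i, w)) := sum_le_sum fun i _ => hcopy i
      _ = _ := (mul_sum ..).symm
  rw [div_le_iff₀ hS, Fintype.sum_sum_type, Fintype.sum_prod_type]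
  nlinarith

lemma fracMetricDim_corona [Nontrivial α] (hG : G.Connected) (hvt : IsVertexTransitive H)
    {a b : β} (hab : a ≠ b)
    (hmin : ∀ u v, u ≠ v → #(locatingFinset H a b) ≤ #(locatingFinset H u v)) :
    fracMetricDim (G.corona H) =
      Fintype.card α * Fintype.card β / #(locatingFinset H a b) := by
  have hs : 0 < #(locatingFinset H a b) := card_pos.mpr ⟨a, by simp [mem_locatingFinset]⟩
  refine IsLeast.csInf_eq
    ⟨⟨_, isResolvingFn_corona_elim_zero_inv G H hG hs (card_le_univ _) hmin, ?_⟩,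
      fun _ ⟨_, hg, hw⟩ =>
        hw ▸ card_mul_card_div_le_sum_of_isResolvingFn_corona G H hvt hab hg⟩
  simp [Fintype.sum_sum_type, div_eq_mul_inv]

end SimpleGraph

theorem stmt_7_general {α β : Type*} [Fintype α] [Fintype β]
    (G : SimpleGraph α) (H : SimpleGraph β) [DecidableRel H.Adj]
    (hG : G.Connected) (hca : 2 ≤ Fintype.card α) (hcb : 2 ≤ Fintype.card β)
    (hvt : IsVertexTransitive H) (k : ℕ) (hreg : H.IsRegularOfDegree k) :
    fracMetricDim (G.corona H) =
      ((Fintype.card α : ℝ) * (Fintype.card β : ℝ)) /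
        ((2 * (k : ℤ) - max (2 * lambdaMax H) (2 * muMax H - 2) : ℤ) : ℝ) := by
  classical
  have : Nontrivial α := Fintype.one_lt_card_iff_nontrivial.mp hca
  have : Nontrivial β := Fintype.one_lt_card_iff_nontrivial.mp hcb
  obtain ⟨a, b, hab, hcard⟩ := hreg.exists_card_locatingFinset_eq
  have hmin (u v : β) (huv : u ≠ v) : #(locatingFinset H a b) ≤ #(locatingFinset H u v) := by
    have := hreg.le_card_locatingFinset huv
    omega
  rw [G.fracMetricDim_corona H hG hvt hab hmin, ← hcard, Int.cast_natCast]

/-- For a connected graph `G` and a vertex-transitive graph `H`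
(of degree `k`),
`dim_f(G ⊙ H) = |V(G)||V(H)| / (2k(H) - max{2λ(H), 2μ(H) - 2})`. -/
theorem stmt_7 {α β : Type*} [Fintype α] [Fintype β] [DecidableEq β]
    (G : SimpleGraph α) (H : SimpleGraph β) [DecidableRel H.Adj]
    (hG : G.Connected) (hca : 2 ≤ Fintype.card α) (hcb : 2 ≤ Fintype.card β)
    (hvt : IsVertexTransitive H) (k : ℕ) (hreg : H.IsRegularOfDegree k) :
    fracMetricDim (G.corona H) =
      ((Fintype.card α : ℝ) * (Fintype.card β : ℝ)) /
        ((2 * (k : ℤ) - max (2 * lambdaMax H) (2 * muMax H - 2) : ℤ) : ℝ) :=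
  stmt_7_general G H hG hca hcb hvt k hreg
end

section
/- Let G be a connected graph and H a graph. Then dim_f(G[H]) ≥ m1(G)·l_f(H) + (m2(G)/2)·dim_f(K2[H]) + (m3(G)/2)·dim_f(K2[H̄]), where H̄ is the complement of H. -/
open Finset

variable {α β V : Type*}

/-!
Fix a resolving function `g` of `G[H]` and let `S u = ∑ v, g (u, v)` be its weight on the fibre
over `u`. Two vertices of one fibre are at distance 1 or 2 in `G[H]`, and vertices of distinct
fibres are at the `G`-distance of their projections. Hence `g` restricted to a fibre is a locating
function of `H`, so `l_f(H) ≤ S u`. For twins `u₁, u₂` no vertex outside their two fibres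
separates vertices inside them, so `g` restricted to these fibres resolves `K₂[H]` when the twins
are adjacent, and `K₂[H̄]` when they are not (then they are at distance 2, and complementing `H`
swaps the distances 1 and 2). In a twin class of size `k ≥ 2` these pairwise bounds add up to
`k/2` times the bound, and summing over the classes gives the inequality.
-/

namespace SimpleGraph

variable {α β : Type*}

open scoped Classical in
/-- The distance between `(u, v)` and `(u, w)` in `G[H]` when `u` is not isolated in `G`. -/
noncomputable def cappedEdist (H : SimpleGraph β) (v w : β) : ℕ∞ :=
  if v = w then 0 else if H.Adj v w then 1 else 2

lemma Walk.edist_fst_le_length {G : SimpleGraph α} {H : SimpleGraph β} {x y : α × β}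
    (p : (G.lexProd H).Walk x y) : G.edist x.1 y.1 ≤ p.length := by
  induction p with
  | nil => simp
  | @cons a c b hac q ih =>
    have hstep : G.edist a.1 c.1 ≤ 1 := by
      rcases hac with hac | ⟨hac, -⟩
      · exact (edist_eq_one_iff_adj.mpr hac).le
      · simp [hac]
    calc G.edist a.1 b.1 ≤ G.edist a.1 c.1 + G.edist c.1 b.1 := G.edist_triangle
      _ ≤ 1 + q.length := add_le_add hstep ih
      _ = (q.cons hac).length := by simp [add_comm]

lemma edist_lexProd_of_ne {G : SimpleGraph α} (H : SimpleGraph β) (hG : G.Connected)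
    {u₁ u₂ : α} (hu : u₁ ≠ u₂) (v₁ v₂ : β) :
    (G.lexProd H).edist (u₁, v₁) (u₂, v₂) = G.edist u₁ u₂ := by
  refine le_antisymm ?_ (le_sInf ?_)
  · obtain ⟨p, hp⟩ := hG.exists_walk_length_eq_edist u₁ u₂
    cases p with
    | nil => exact absurd rfl hu
    | @cons _ x _ hx q =>
      -- switch from `v₁` to `v₂` along the first edge of `p`, then follow the rest of `p`
      let ι : G →g G.lexProd H := ⟨fun u => (u, v₂), Or.inl⟩
      have hfirst : (G.lexProd H).Adj (u₁, v₁) (x, v₂) := Or.inl hx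
      rw [← hp]
      exact (Walk.cons hfirst (q.map ι)).edist_le.trans_eq (by simp)
  · rintro _ ⟨p, rfl⟩
    exact p.edist_fst_le_length

lemma edist_lexProd_fibre {G : SimpleGraph α} (H : SimpleGraph β) [Nontrivial α]
    (hG : G.Preconnected) (u : α) (v₁ v₂ : β) :
    (G.lexProd H).edist (u, v₁) (u, v₂) = H.cappedEdist v₁ v₂ := by
  unfold cappedEdist
  split_ifs with hv hadj
  · simp [hv]
  · exact edist_eq_one_iff_adj.mpr (Or.inr ⟨rfl, hadj⟩)
  · obtain ⟨x, hx⟩ := (mem_support G).mp (hG.support_eq_univ ▸ Set.mem_univ u)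
    refine edist_eq_two_iff.mpr ⟨by simpa using hv, ?_, (x, v₁), Or.inl hx, Or.inl hx⟩
    rintro (h | ⟨-, h⟩)
    exacts [G.irrefl h, hadj h]

lemma cappedEdist_compl (H : SimpleGraph β) (v w : β) :
    Hᶜ.cappedEdist v w = Equiv.swap 1 2 (H.cappedEdist v w) := by
  unfold cappedEdist
  by_cases hvw : v = w <;> by_cases hadj : H.Adj v w <;>
    simp [hvw, hadj, compl_adj, Equiv.swap_apply_of_ne_of_ne]

end SimpleGraph

lemma Finset.sum_le_sum_comp_of_subset_image {ι κ M : Type*} [DecidableEq κ]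
    [AddCommMonoid M] [PartialOrder M] [IsOrderedAddMonoid M] {s : Finset κ} {t : Finset ι}
    {f : ι → κ} (hf : Function.Injective f) {g : κ → M} (hg : ∀ k, 0 ≤ g k)
    (hst : s ⊆ t.image f) : ∑ k ∈ s, g k ≤ ∑ i ∈ t, g (f i) :=
  (Finset.sum_le_sum_of_subset_of_nonneg hst fun k _ _ => hg k).trans_eq
    (Finset.sum_image fun _ _ _ _ h => hf h)

section FractionalDimension

variable {V W : Type*} [Fintype V] [Fintype W]

lemma IsResolvingFn.fracMetricDim_le {F : SimpleGraph V} {g : V → ℝ}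
    (hg : IsResolvingFn F g) : fracMetricDim F ≤ ∑ v, g v :=
  csInf_le ⟨0, by rintro _ ⟨g', hg', rfl⟩; exact Finset.sum_nonneg fun v _ => (hg'.1 v).1⟩
    ⟨g, hg, rfl⟩

lemma IsLocatingFn.fracLoc_le [DecidableEq V] {H : SimpleGraph V} [DecidableRel H.Adj]
    {g : V → ℝ} (hg : IsLocatingFn H g) : fracLoc H ≤ ∑ v, g v :=
  csInf_le ⟨0, by rintro _ ⟨g', hg', rfl⟩; exact Finset.sum_nonneg fun v _ => (hg'.1 v).1⟩
    ⟨g, hg, rfl⟩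

lemma isResolvingFn_one (F : SimpleGraph V) : IsResolvingFn F 1 := by
  refine ⟨fun _ => by simp, fun x y hxy => ?_⟩
  have hx : x ∈ resolvingFinset F x y := by
    simpa [resolvingFinset, eq_comm (a := (0 : ℕ∞))] using hxy.symm
  simpa using Finset.card_pos.mpr ⟨x, hx⟩

lemma le_fracMetricDim {F : SimpleGraph V} {c : ℝ}
    (h : ∀ g, IsResolvingFn F g → c ≤ ∑ v, g v) : c ≤ fracMetricDim F :=
  le_csInf ⟨_, 1, isResolvingFn_one F, rfl⟩ fun _ ⟨g, hg, hw⟩ => hw ▸ h g hg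

lemma IsResolvingFn.comp {F : SimpleGraph V} {F' : SimpleGraph W} {g : V → ℝ}
    (hg : IsResolvingFn F g) {f : W → V} (hf : Function.Injective f) {σ : ℕ∞ → ℕ∞}
    (hσ : Function.Injective σ) (hdist : ∀ x w, F'.edist x w = σ (F.edist (f x) (f w)))
    (hout : ∀ x y z, z ∉ Set.range f → F.edist (f x) z = F.edist (f y) z) :
    IsResolvingFn F' (g ∘ f) := by
  classical
  refine ⟨fun w => hg.1 (f w), fun x y hxy => (hg.2 _ _ (hf.ne hxy)).trans ?_⟩
  refine Finset.sum_le_sum_comp_of_subset_image hf (fun v => (hg.1 v).1) fun z hz => ?_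
  simp only [resolvingFinset, Finset.mem_filter, Finset.mem_univ, true_and] at hz
  obtain ⟨w, rfl⟩ : z ∈ Set.range f := by_contra fun hz' => hz (hout x y z hz')
  simpa [resolvingFinset, hdist] using ⟨w, fun h => hz (hσ h), rfl⟩

end FractionalDimension

namespace SimpleGraph.Twins

variable {α : Type*} {G : SimpleGraph α} {u₁ u₂ u w w' x : α}

lemma symm (h : G.Twins u₁ u₂) : G.Twins u₂ u₁ :=
  ⟨h.1.symm, h.2.imp Eq.symm Eq.symm⟩

lemma insert_neighborSet_eq_of_adj (h : G.Twins u₁ u₂) (hadj : G.Adj u₁ u₂) :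
    insert u₁ (G.neighborSet u₁) = insert u₂ (G.neighborSet u₂) :=
  h.2.resolve_right fun hN => G.irrefl (hN ▸ hadj.symm : u₁ ∈ G.neighborSet u₁)

lemma neighborSet_eq_of_not_adj (h : G.Twins u₁ u₂) (hnadj : ¬G.Adj u₁ u₂) :
    G.neighborSet u₁ = G.neighborSet u₂ := by
  refine h.2.resolve_left fun hN => ?_
  have : u₁ ∈ insert u₂ (G.neighborSet u₂) := hN ▸ Set.mem_insert _ _
  rcases this with h' | h'
  exacts [h.1 h', hnadj (G.adj_symm h')]

lemma adj_of_adj (h : G.Twins u₁ u₂) (hx : G.Adj u₁ x) (hne : x ≠ u₂) : G.Adj u₂ x := by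
  rcases h.2 with hN | hN
  · have : x ∈ insert u₂ (G.neighborSet u₂) := hN ▸ Set.mem_insert_of_mem _ hx
    exact this.resolve_left hne
  · exact (hN ▸ hx : x ∈ G.neighborSet u₂)

lemma adj_of_twins_of_adj (h : G.Twins u w) (hadj : G.Adj u w) (h' : G.Twins u w') :
    G.Adj u w' := by
  by_contra hn
  have hw : G.Adj w' w := (h'.neighborSet_eq_of_not_adj hn ▸ hadj : w ∈ G.neighborSet w')
  have : w' ∈ insert u (G.neighborSet u) :=
    h.insert_neighborSet_eq_of_adj hadj ▸ Set.mem_insert_of_mem _ hw.symm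
  exact this.elim (fun he => h'.1 he.symm) hn

lemma edist_le (hG : G.Connected) (h : G.Twins u₁ u₂) (hw : w ≠ u₁) :
    G.edist u₂ w ≤ G.edist u₁ w := by
  obtain ⟨p, hp⟩ := hG.exists_walk_length_eq_edist u₁ w
  cases p with
  | nil => exact absurd rfl hw
  | @cons _ x _ hx q =>
    rw [← hp, Walk.length_cons, Nat.cast_add, Nat.cast_one]
    by_cases hxu : x = u₂
    · subst hxu
      exact q.edist_le.trans le_self_add
    · exact (Walk.cons (h.adj_of_adj hx hxu) q).edist_le.trans_eq (by simp)

lemma edist_eq (hG : G.Connected) (h : G.Twins u₁ u₂) (hw₁ : w ≠ u₁) (hw₂ : w ≠ u₂) :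
    G.edist u₁ w = G.edist u₂ w :=
  le_antisymm (h.symm.edist_le hG hw₂) (h.edist_le hG hw₁)

lemma edist_eq_two_of_not_adj [Nontrivial α] (hG : G.Preconnected) (h : G.Twins u₁ u₂)
    (hnadj : ¬G.Adj u₁ u₂) : G.edist u₁ u₂ = 2 := by
  obtain ⟨x, hx⟩ := (mem_support G).mp (hG.support_eq_univ ▸ Set.mem_univ u₁)
  have hx₂ : G.Adj u₂ x := (h.neighborSet_eq_of_not_adj hnadj ▸ hx : x ∈ G.neighborSet u₂)
  exact edist_eq_two_iff.mpr ⟨h.1, hnadj, x, hx, hx₂⟩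

end SimpleGraph.Twins

namespace SimpleGraph

variable {α β : Type*} [Fintype α] [Fintype β] [Nontrivial α] {G : SimpleGraph α}
  {g : α × β → ℝ}

lemma mem_locatingFinset_of_cappedEdist_ne [DecidableEq β] {H : SimpleGraph β}
    [DecidableRel H.Adj] {v₁ v₂ y : β} (hv : v₁ ≠ v₂)
    (h : H.cappedEdist v₁ y ≠ H.cappedEdist v₂ y) : y ∈ locatingFinset H v₁ v₂ := by
  unfold cappedEdist at h
  by_cases h₁ : v₁ = y <;> by_cases h₂ : v₂ = y <;>
    by_cases a₁ : H.Adj v₁ y <;> by_cases a₂ : H.Adj v₂ y <;>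
      simp_all [locatingFinset, Finset.mem_symmDiff]

/-- Two vertices of one fibre of `G[H]` are separated only by vertices of that fibre, namely by
those in `locatingFinset`. -/
lemma _root_.IsResolvingFn.isLocatingFn_fibre [DecidableEq β] {H : SimpleGraph β} [DecidableRel H.Adj]
    (hG : G.Connected) (hg : IsResolvingFn (G.lexProd H) g) (u : α) :
    IsLocatingFn H fun v => g (u, v) := by
  classical
  refine ⟨fun v => hg.1 (u, v), fun v₁ v₂ hv => (hg.2 (u, v₁) (u, v₂) (by simpa)).trans ?_⟩
  refine Finset.sum_le_sum_comp_of_subset_image (Prod.mk_right_injective u)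
    (fun z => (hg.1 z).1) ?_
  rintro ⟨a, y⟩ hz
  simp only [resolvingFinset, Finset.mem_filter, Finset.mem_univ, true_and] at hz
  obtain rfl : u = a := by
    by_contra hua
    simp [edist_lexProd_of_ne H hG hua] at hz
  rw [edist_lexProd_fibre H hG.preconnected, edist_lexProd_fibre H hG.preconnected] at hz
  exact Finset.mem_image_of_mem _ (mem_locatingFinset_of_cappedEdist_ne hv hz)

/-- The fibres over twins span a copy of `K₂[K]` in `G[H]`, up to the relabelling `σ` of
distances. -/
lemma Twins.fracMetricDim_top_lexProd_le {H K : SimpleGraph β} (hG : G.Connected) {u₁ u₂ : α}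
    (htw : G.Twins u₁ u₂) {σ : ℕ∞ → ℕ∞} (hσ : Function.Injective σ)
    (hK : ∀ v w, K.cappedEdist v w = σ (H.cappedEdist v w)) (hσ₁ : σ (G.edist u₁ u₂) = 1)
    (hg : IsResolvingFn (G.lexProd H) g) :
    fracMetricDim ((⊤ : SimpleGraph (Fin 2)).lexProd K) ≤
      ∑ v, g (u₁, v) + ∑ v, g (u₂, v) := by
  let e : Fin 2 → α := ![u₁, u₂]
  have he : Function.Injective e := by
    intro i j; fin_cases i <;> fin_cases j <;> simp [e, htw.1, htw.1.symm]
  have hσe : ∀ i j, i ≠ j → σ (G.edist (e i) (e j)) = 1 := by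
    intro i j; fin_cases i <;> fin_cases j <;> simp [e, hσ₁, edist_comm]
  have hres : IsResolvingFn ((⊤ : SimpleGraph (Fin 2)).lexProd K)
      (g ∘ fun p => (e p.1, p.2)) := by
    refine hg.comp (he.prodMap Function.injective_id) hσ ?_ ?_
    · rintro ⟨i, v⟩ ⟨j, w⟩
      by_cases hij : i = j
      · subst hij
        simp only [edist_lexProd_fibre _ hG.preconnected, edist_lexProd_fibre _
          connected_top.preconnected, hK]
      · simp only [edist_lexProd_of_ne _ hG (he.ne hij), edist_lexProd_of_ne _ connected_top hij,
          edist_top_of_ne hij, hσe i j hij]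
    · rintro ⟨i, v⟩ ⟨j, w⟩ ⟨a, y⟩ ha
      have hae : ∀ k, e k ≠ a := fun k hk => ha ⟨(k, y), by simp [hk]⟩
      have hedist : G.edist u₁ a = G.edist u₂ a :=
        htw.edist_eq hG (hae 0).symm (hae 1).symm
      simp only [edist_lexProd_of_ne _ hG (hae _)]
      fin_cases i <;> fin_cases j <;> simp [e, hedist]
  refine hres.fracMetricDim_le.trans_eq ?_
  simp [Fintype.sum_prod_type, e]

end SimpleGraph

namespace Finset

variable {ι κ K : Type*} [Field K] [LinearOrder K] [IsStrictOrderedRing K] {s : Finset ι}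
  {S : ι → K} {D : K}

lemma card_div_two_mul_le_sum (hs : s.Nontrivial)
    (h : ∀ u ∈ s, ∀ w ∈ s, u ≠ w → D ≤ S u + S w) : (#s : K) / 2 * D ≤ ∑ u ∈ s, S u := by
  classical
  -- with `a := S - D / 2`, the pairwise sums of `a` are nonnegative; then every value except
  -- possibly the least one is nonnegative, and the least one is compensated by any other
  set a : ι → K := fun u => S u - D / 2
  suffices 0 ≤ ∑ u ∈ s, a u by
    simp only [a, sum_sub_distrib, sum_const, nsmul_eq_mul] at this
    linarith
  obtain ⟨u₀, hu₀, hmin⟩ := s.exists_min_image a hs.nonempty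
  obtain ⟨w₀, hw₀, hne⟩ := hs.exists_ne u₀
  have hpair : ∀ w ∈ s.erase u₀, 0 ≤ a u₀ + a w := fun w hw => by
    have := h u₀ hu₀ w (mem_of_mem_erase hw) (ne_of_mem_erase hw).symm
    simp only [a]; linarith
  have hrest : ∀ w ∈ s.erase u₀, 0 ≤ a w := fun w hw => by
    linarith [hpair w hw, hmin w (mem_of_mem_erase hw)]
  have hw₀' : w₀ ∈ s.erase u₀ := mem_erase.mpr ⟨hne, hw₀⟩
  rw [← add_sum_erase s a hu₀]
  linarith [hpair w₀ hw₀', single_le_sum hrest hw₀']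

lemma card_div_two_mul_le_sum_of_fibres [DecidableEq κ] (f : ι → κ)
    (hpartner : ∀ u ∈ s, ∃ w ∈ s, w ≠ u ∧ f w = f u)
    (h : ∀ u ∈ s, ∀ w ∈ s, u ≠ w → f u = f w → D ≤ S u + S w) :
    (#s : K) / 2 * D ≤ ∑ u ∈ s, S u := by
  have hmaps : ∀ u ∈ s, f u ∈ s.image f := fun u hu => mem_image_of_mem f hu
  rw [card_eq_sum_card_fiberwise hmaps, ← sum_fiberwise_of_maps_to hmaps, Nat.cast_sum,
    sum_div, sum_mul]
  refine sum_le_sum fun y hy => card_div_two_mul_le_sum ?_ fun u hu w hw huw => ?_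
  · obtain ⟨u, hu, rfl⟩ := mem_image.mp hy
    obtain ⟨w, hw, hwu, hfw⟩ := hpartner u hu
    exact ⟨w, by simp [hw, hfw], u, by simp [hu], hwu⟩
  · rw [mem_filter] at hu hw
    exact h u hu.1 w hw.1 huw (hu.2.trans hw.2.symm)

end Finset

namespace SimpleGraph

variable {α : Type*} [Fintype α] (G : SimpleGraph α) {S : α → ℝ}

open scoped Classical in
lemma m2_div_two_mul_le_sum {B : ℝ} (hB : ∀ u w, G.Twins u w → G.Adj u w → B ≤ S u + S w) :
    (m2 G : ℝ) / 2 * B ≤ ∑ u ∈ univ.filter (fun u => ∃ w, G.Twins u w ∧ G.Adj u w), S u := by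
  -- a class of adjacent twins is determined by its common closed neighbourhood
  refine card_div_two_mul_le_sum_of_fibres (fun u => insert u (G.neighborSet u)) ?_ ?_
  · intro u hu
    obtain ⟨w, htw, hadj⟩ := (mem_filter.mp hu).2
    exact ⟨w, by simpa using ⟨u, htw.symm, hadj.symm⟩, htw.1.symm,
      (htw.insert_neighborSet_eq_of_adj hadj).symm⟩
  · intro u _ w _ huw hN
    have hw : w ∈ insert u (G.neighborSet u) := hN ▸ Set.mem_insert w _
    exact hB u w ⟨huw, Or.inl hN⟩ (hw.resolve_left huw.symm)

open scoped Classical in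
lemma m3_div_two_mul_le_sum {C : ℝ} (hC : ∀ u w, G.Twins u w → ¬G.Adj u w → C ≤ S u + S w) :
    (m3 G : ℝ) / 2 * C ≤ ∑ u ∈ univ.filter (fun u => ∃ w, G.Twins u w ∧ ¬G.Adj u w), S u := by
  refine card_div_two_mul_le_sum_of_fibres (fun u => G.neighborSet u) ?_ ?_
  · intro u hu
    obtain ⟨w, htw, hnadj⟩ := (mem_filter.mp hu).2
    exact ⟨w, by simpa using ⟨u, htw.symm, fun h => hnadj h.symm⟩, htw.1.symm,
      (htw.neighborSet_eq_of_not_adj hnadj).symm⟩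
  · intro u _ w _ huw hN
    exact hC u w ⟨huw, Or.inr hN⟩ fun hadj => G.irrefl (hN ▸ hadj : w ∈ G.neighborSet w)

open scoped Classical in
lemma m1_mul_add_m2_mul_add_m3_mul_le_sum (hS : ∀ u, 0 ≤ S u) {A B C : ℝ}
    (hA : ∀ u, A ≤ S u) (hB : ∀ u w, G.Twins u w → G.Adj u w → B ≤ S u + S w)
    (hC : ∀ u w, G.Twins u w → ¬G.Adj u w → C ≤ S u + S w) :
    (m1 G : ℝ) * A + (m2 G : ℝ) / 2 * B + (m3 G : ℝ) / 2 * C ≤ ∑ u, S u := by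
  set P₁ := univ.filter fun u => ∀ w, ¬G.Twins u w
  set P₂ := univ.filter fun u => ∃ w, G.Twins u w ∧ G.Adj u w
  set P₃ := univ.filter fun u => ∃ w, G.Twins u w ∧ ¬G.Adj u w
  have h₁ : (m1 G : ℝ) * A ≤ ∑ u ∈ P₁, S u := by
    simpa [m1, P₁] using card_nsmul_le_sum P₁ S A fun u _ => hA u
  have h₁₂ : Disjoint P₁ P₂ := disjoint_filter.mpr fun u _ h₁ ⟨w, htw, _⟩ => h₁ w htw
  have h₁₃ : Disjoint P₁ P₃ := disjoint_filter.mpr fun u _ h₁ ⟨w, htw, _⟩ => h₁ w htw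
  have h₂₃ : Disjoint P₂ P₃ := disjoint_filter.mpr fun u _ ⟨w, htw, hadj⟩ ⟨w', htw', hnadj⟩ =>
    hnadj (htw.adj_of_twins_of_adj hadj htw')
  calc _ ≤ ∑ u ∈ P₁, S u + ∑ u ∈ P₂, S u + ∑ u ∈ P₃, S u := by
        linarith [G.m2_div_two_mul_le_sum hB, G.m3_div_two_mul_le_sum hC]
    _ = ∑ u ∈ P₁ ∪ P₂ ∪ P₃, S u := by
        rw [sum_union (disjoint_union_left.mpr ⟨h₁₃, h₂₃⟩), sum_union h₁₂]
    _ ≤ ∑ u, S u := sum_le_univ_sum_of_nonneg hS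

end SimpleGraph

theorem stmt_15_general {α β : Type*} [Fintype α] [Fintype β] [DecidableEq β]
    (G : SimpleGraph α) (H : SimpleGraph β) [DecidableRel H.Adj]
    (hG : G.Connected) (hca : 2 ≤ Fintype.card α) :
    (m1 G : ℝ) * fracLoc H +
        (m2 G : ℝ) / 2 * fracMetricDim ((⊤ : SimpleGraph (Fin 2)).lexProd H) +
        (m3 G : ℝ) / 2 * fracMetricDim ((⊤ : SimpleGraph (Fin 2)).lexProd Hᶜ) ≤
      fracMetricDim (G.lexProd H) := by
  have : Nontrivial α := Fintype.one_lt_card_iff_nontrivial.mp hca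
  refine le_fracMetricDim fun g hg => ?_
  rw [Fintype.sum_prod_type]
  refine G.m1_mul_add_m2_mul_add_m3_mul_le_sum (fun u => sum_nonneg fun v _ => (hg.1 (u, v)).1)
    (fun u => (hg.isLocatingFn_fibre hG u).fracLoc_le) ?_ ?_
  · intro u w htw hadj
    exact htw.fracMetricDim_top_lexProd_le hG Function.injective_id (fun _ _ => rfl)
      (SimpleGraph.edist_eq_one_iff_adj.mpr hadj) hg
  · intro u w htw hnadj
    refine htw.fracMetricDim_top_lexProd_le hG (Equiv.injective _) H.cappedEdist_compl ?_ hg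
    rw [htw.edist_eq_two_of_not_adj hG.preconnected hnadj, Equiv.swap_apply_right]

/-- For a connected graph `G` and a graph `H`,
`dim_f(G[H]) ≥ m₁(G)·l_f(H) + (m₂(G)/2)·dim_f(K₂[H]) + (m₃(G)/2)·dim_f(K₂[H̄])`. -/
theorem stmt_15 {α β : Type*} [Fintype α] [Fintype β] [DecidableEq β]
    (G : SimpleGraph α) (H : SimpleGraph β) [DecidableRel H.Adj]
    (hG : G.Connected) (hca : 2 ≤ Fintype.card α) (hcb : 2 ≤ Fintype.card β) :
    (m1 G : ℝ) * fracLoc H +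
        (m2 G : ℝ) / 2 * fracMetricDim ((⊤ : SimpleGraph (Fin 2)).lexProd H) +
        (m3 G : ℝ) / 2 * fracMetricDim ((⊤ : SimpleGraph (Fin 2)).lexProd Hᶜ) ≤
      fracMetricDim (G.lexProd H) :=
  stmt_15_general G H hG hca
end
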